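/- Let p ≥ 2, C₁ > 0, ε > 0, and let h be C¹ on a neighborhood of the triangle T = {(x,y) : 0 ≤ x ≤ ε/C₁, -C₁x/2 ≤ y ≤ 0}. Define F(x) = (2/(C₁x)) ∫_{-C₁x/2}^0 h(x,y) dy. Then ∫_0^{ε/C₁} |F'(x)|^p dx ≤ ∫_0^{ε/C₁} ((2^p + C₁^p)/(C₁ x)) ∫_{-C₁x/2}^0 (|∂ₓh(x,y)|^p + |∂_y h(x,y)|^p) dy dx. -/

import Mathlib

open MeasureTheory intervalIntegral Set NNReal Metric

lemma my_add_rpow_le {a b : ℝ} (ha : 0 ≤ a) (hb : 0 ≤ b) {p : ℝ} (hp : 1 ≤ p) :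
    (a + b) ^ p ≤ 2 ^ (p - 1) * (a ^ p + b ^ p) := by
  have := NNReal.rpow_add_le_mul_rpow_add_rpow (⟨a, ha⟩ : ℝ≥0) (⟨b, hb⟩ : ℝ≥0) hp
  exact_mod_cast this

lemma my_jensen {u : ℝ → ℝ} (hu : Continuous u) (hu0 : ∀ t, 0 ≤ u t) {p : ℝ} (hp : 1 ≤ p) :
    (∫ t in (-1:ℝ)..0, u t) ^ p ≤ ∫ t in (-1:ℝ)..0, u t ^ p := by
  have hle : (-1:ℝ) ≤ 0 := by norm_num
  have hprob : IsProbabilityMeasure (volume.restrict (Ioc (-1:ℝ) 0)) := by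
    constructor
    simp [Real.volume_Ioc]
  rw [intervalIntegral.integral_of_le hle, intervalIntegral.integral_of_le hle]
  have hconv : ConvexOn ℝ (Ici (0:ℝ)) fun x : ℝ => x ^ p := convexOn_rpow hp
  have hcont : ContinuousOn (fun x : ℝ => x ^ p) (Ici 0) :=
    (Real.continuous_rpow_const (by linarith)).continuousOn
  exact hconv.map_integral_le hcont isClosed_Ici (ae_of_all _ fun t => hu0 t)
    (hu.integrableOn_Ioc) ((hu.rpow_const fun t => Or.inr (by linarith)).integrableOn_Ioc)

lemma my_cov (c : ℝ) (hc : c ≠ 0) (g : ℝ → ℝ) :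
    ∫ t in (-1:ℝ)..0, g (c * t) = c⁻¹ * ∫ y in (-c)..0, g y := by
  rw [intervalIntegral.integral_comp_mul_left g hc, mul_neg_one, mul_zero, smul_eq_mul]

lemma my_pointwise (p : ℝ) (hp : 2 ≤ p) (C₁ : ℝ) (hC₁ : 0 < C₁)
    (h : ℝ × ℝ → ℝ) (hh : ContDiff ℝ 1 h) (x : ℝ) (hx : 0 < x) :
    |∫ t in (-1:ℝ)..0, (fderiv ℝ h (x, C₁ * x / 2 * t)) (1, C₁ * t / 2)| ^ p ≤
      ((2 ^ p + C₁ ^ p) / (C₁ * x)) * ∫ y in (-(C₁ * x) / 2)..0,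
        (|fderiv ℝ h (x, y) (1, 0)| ^ p + |fderiv ℝ h (x, y) (0, 1)| ^ p) := by
  have hp0 : (0:ℝ) ≤ p := by linarith
  have hp1 : (1:ℝ) ≤ p := by linarith
  have hfd : Continuous (fderiv ℝ h) := hh.continuous_fderiv one_ne_zero
  have hinner : Continuous fun t : ℝ => ((x, C₁ * x / 2 * t) : ℝ × ℝ) :=
    continuous_const.prodMk (continuous_const.mul continuous_id)
  set u₁ : ℝ → ℝ := fun t => |(fderiv ℝ h (x, C₁ * x / 2 * t)) (1, 0)| with hu₁def
  set u₂ : ℝ → ℝ := fun t => |(fderiv ℝ h (x, C₁ * x / 2 * t)) (0, 1)| with hu₂def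
  have hu₁ : Continuous u₁ := ((hfd.comp hinner).clm_apply continuous_const).abs
  have hu₂ : Continuous u₂ := ((hfd.comp hinner).clm_apply continuous_const).abs
  have hgcont : Continuous fun t => u₁ t + C₁ / 2 * u₂ t := hu₁.add (continuous_const.mul hu₂)
  -- step 1: bound |L x|
  have hb : ∀ᵐ t ∂volume.restrict (Set.uIoc (-1:ℝ) 0),
      ‖(fderiv ℝ h (x, C₁ * x / 2 * t)) (1, C₁ * t / 2)‖ ≤ u₁ t + C₁ / 2 * u₂ t := by
    refine (ae_restrict_iff' measurableSet_uIoc).mpr (Filter.Eventually.of_forall fun t ht => ?_)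
    have ht' : |t| ≤ 1 := by
      rw [Set.uIoc_of_le (by norm_num : (-1:ℝ) ≤ 0)] at ht
      rw [abs_le]; exact ⟨ht.1.le, ht.2.trans zero_le_one⟩
    have hsplit : ((1:ℝ), C₁ * t / 2) = (1, 0) + (C₁ * t / 2) • ((0:ℝ), (1:ℝ)) := by
      simp [Prod.ext_iff]
    rw [hsplit, map_add, _root_.map_smul, smul_eq_mul, Real.norm_eq_abs]
    have habs : |C₁ * t / 2| ≤ C₁ / 2 := by
      rw [abs_div, abs_mul, abs_of_pos hC₁, (by norm_num : |(2:ℝ)| = 2)]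
      nlinarith [abs_nonneg t]
    calc |(fderiv ℝ h (x, C₁ * x / 2 * t)) (1, 0) +
            C₁ * t / 2 * (fderiv ℝ h (x, C₁ * x / 2 * t)) (0, 1)|
        ≤ |(fderiv ℝ h (x, C₁ * x / 2 * t)) (1, 0)| +
            |C₁ * t / 2 * (fderiv ℝ h (x, C₁ * x / 2 * t)) (0, 1)| := abs_add_le _ _
      _ ≤ u₁ t + C₁ / 2 * u₂ t := by
          rw [abs_mul]
          exact add_le_add_right
            (mul_le_mul_of_nonneg_right habs (abs_nonneg _)) _
  have h1 := intervalIntegral.norm_integral_le_of_norm_le (by norm_num : (-1:ℝ) ≤ 0)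
    ((ae_restrict_iff' measurableSet_Ioc).mp
      (by rwa [Set.uIoc_of_le (by norm_num : (-1:ℝ) ≤ 0)] at hb)) (hgcont.intervalIntegrable _ _)
  have hg0 : 0 ≤ ∫ t in (-1:ℝ)..0, (u₁ t + C₁ / 2 * u₂ t) :=
    intervalIntegral.integral_nonneg (by norm_num) fun t _ => by positivity
  rw [Real.norm_eq_abs] at h1
  set A := ∫ t in (-1:ℝ)..0, u₁ t with hAdef
  set B := ∫ t in (-1:ℝ)..0, u₂ t with hBdef
  have hsum : (∫ t in (-1:ℝ)..0, (u₁ t + C₁ / 2 * u₂ t)) = A + C₁ / 2 * B := by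
    rw [intervalIntegral.integral_add (g := fun t => C₁ / 2 * u₂ t) (hu₁.intervalIntegrable _ _)
      ((continuous_const.mul hu₂).intervalIntegrable _ _), intervalIntegral.integral_const_mul]
  rw [hsum] at h1
  have hA0 : 0 ≤ A := intervalIntegral.integral_nonneg (by norm_num) fun t _ => abs_nonneg _
  have hB0 : 0 ≤ B := intervalIntegral.integral_nonneg (by norm_num) fun t _ => abs_nonneg _
  -- change of variables facts
  have hcne : C₁ * x / 2 ≠ 0 := by positivity
  have hend : -(C₁ * x / 2) = -(C₁ * x) / 2 := by ring
  have hI₁ : (∫ t in (-1:ℝ)..0, u₁ t ^ p) =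
      (C₁ * x / 2)⁻¹ * ∫ y in (-(C₁ * x) / 2)..0, |(fderiv ℝ h (x, y)) (1, 0)| ^ p := by
    have := my_cov (C₁ * x / 2) hcne (fun y => |(fderiv ℝ h (x, y)) (1, 0)| ^ p)
    rw [hend] at this
    simpa only [] using this
  have hI₂ : (∫ t in (-1:ℝ)..0, u₂ t ^ p) =
      (C₁ * x / 2)⁻¹ * ∫ y in (-(C₁ * x) / 2)..0, |(fderiv ℝ h (x, y)) (0, 1)| ^ p := by
    have := my_cov (C₁ * x / 2) hcne (fun y => |(fderiv ℝ h (x, y)) (0, 1)| ^ p)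
    rw [hend] at this
    simpa only [] using this
  set I₁ := ∫ y in (-(C₁ * x) / 2)..0, |(fderiv ℝ h (x, y)) (1, 0)| ^ p with hI₁def
  set I₂ := ∫ y in (-(C₁ * x) / 2)..0, |(fderiv ℝ h (x, y)) (0, 1)| ^ p with hI₂def
  have hylo : -(C₁ * x) / 2 ≤ 0 := by nlinarith
  have hI₁0 : 0 ≤ I₁ := intervalIntegral.integral_nonneg hylo fun y _ => by positivity
  have hI₂0 : 0 ≤ I₂ := intervalIntegral.integral_nonneg hylo fun y _ => by positivity
  have hy₁ : Continuous fun y : ℝ => |(fderiv ℝ h (x, y)) (1, 0)| ^ p :=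
    (((hfd.comp (continuous_const.prodMk continuous_id)).clm_apply continuous_const).abs).rpow_const
      fun y => Or.inr hp0
  have hy₂ : Continuous fun y : ℝ => |(fderiv ℝ h (x, y)) (0, 1)| ^ p :=
    (((hfd.comp (continuous_const.prodMk continuous_id)).clm_apply continuous_const).abs).rpow_const
      fun y => Or.inr hp0
  have hsplitI : (∫ y in (-(C₁ * x) / 2)..0,
      (|fderiv ℝ h (x, y) (1, 0)| ^ p + |fderiv ℝ h (x, y) (0, 1)| ^ p)) = I₁ + I₂ := by
    rw [intervalIntegral.integral_add (hy₁.intervalIntegrable _ _) (hy₂.intervalIntegrable _ _)]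
  -- main chain
  have hchain : |∫ t in (-1:ℝ)..0, (fderiv ℝ h (x, C₁ * x / 2 * t)) (1, C₁ * t / 2)| ^ p ≤
      2 ^ (p - 1) * ((C₁ * x / 2)⁻¹ * I₁ + (C₁ / 2) ^ p * ((C₁ * x / 2)⁻¹ * I₂)) := by
    calc |∫ t in (-1:ℝ)..0, (fderiv ℝ h (x, C₁ * x / 2 * t)) (1, C₁ * t / 2)| ^ p
        ≤ (A + C₁ / 2 * B) ^ p := Real.rpow_le_rpow (abs_nonneg _) h1 hp0
      _ ≤ 2 ^ (p - 1) * (A ^ p + (C₁ / 2 * B) ^ p) := my_add_rpow_le hA0 (by positivity) hp1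
      _ ≤ 2 ^ (p - 1) * ((C₁ * x / 2)⁻¹ * I₁ + (C₁ / 2) ^ p * ((C₁ * x / 2)⁻¹ * I₂)) := by
          have hj₁ : A ^ p ≤ (C₁ * x / 2)⁻¹ * I₁ := by
            rw [← hI₁]; exact my_jensen hu₁ (fun t => abs_nonneg _) hp1
          have hj₂ : (C₁ / 2 * B) ^ p ≤ (C₁ / 2) ^ p * ((C₁ * x / 2)⁻¹ * I₂) := by
            rw [Real.mul_rpow (by positivity) hB0, ← hI₂]
            exact mul_le_mul_of_nonneg_left (my_jensen hu₂ (fun t => abs_nonneg _) hp1)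
              (by positivity)
          have h2p1 : (0:ℝ) ≤ 2 ^ (p - 1) := Real.rpow_nonneg (by norm_num) _
          nlinarith
  rw [hsplitI]
  refine hchain.trans ?_
  have hd : (2:ℝ) ^ (p - 1) = 2 ^ p / 2 := by
    rw [Real.rpow_sub (by norm_num : (0:ℝ) < 2), Real.rpow_one]
  have he : (C₁ / 2) ^ p = C₁ ^ p / 2 ^ p := Real.div_rpow hC₁.le (by norm_num) p
  have hcx : C₁ * x ≠ 0 := by positivity
  have h2pne : (2:ℝ) ^ p ≠ 0 := ne_of_gt (Real.rpow_pos_of_pos (by norm_num) p)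
  have hkey : (2:ℝ) ^ (p - 1) * ((C₁ * x / 2)⁻¹ * I₁ + (C₁ / 2) ^ p * ((C₁ * x / 2)⁻¹ * I₂)) =
      (2 ^ p * I₁ + C₁ ^ p * I₂) / (C₁ * x) := by
    rw [hd, he]
    field_simp
  rw [hkey, div_mul_eq_mul_div, div_le_div_iff₀ (by positivity) (by positivity)]
  nlinarith [mul_nonneg (Real.rpow_nonneg (by norm_num : (0:ℝ) ≤ 2) p) hI₂0,
    mul_nonneg (Real.rpow_nonneg hC₁.le p) hI₁0, mul_pos hC₁ hx]



lemma my_hasDerivAt (C₁ : ℝ) (hC₁ : 0 < C₁) (h : ℝ × ℝ → ℝ) (hh : ContDiff ℝ 1 h) (x₀ : ℝ) :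
    HasDerivAt (fun x => ∫ t in (-1:ℝ)..0, h (x, C₁ * x / 2 * t))
      (∫ t in (-1:ℝ)..0, (fderiv ℝ h (x₀, C₁ * x₀ / 2 * t)) (1, C₁ * t / 2)) x₀ := by
  have hc : Continuous h := hh.continuous
  have hfd : Continuous (fderiv ℝ h) := hh.continuous_fderiv one_ne_zero
  set R : ℝ := (|x₀| + 1) * (1 + C₁) with hR
  have hR0 : 0 ≤ R := by positivity
  obtain ⟨K, hK⟩ := (isCompact_closedBall (0 : ℝ × ℝ) R).exists_bound_of_continuousOn
    hfd.continuousOn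
  have hK0 : 0 ≤ K := le_trans (norm_nonneg _) (hK 0 (mem_closedBall_self hR0))
  have key := intervalIntegral.hasDerivAt_integral_of_dominated_loc_of_deriv_le
    (F := fun x t => h (x, C₁ * x / 2 * t))
    (F' := fun x t => (fderiv ℝ h (x, C₁ * x / 2 * t)) (1, C₁ * t / 2))
    (x₀ := x₀) (a := (-1:ℝ)) (b := 0) (μ := volume)
    (bound := fun _ => K * (1 + C₁ / 2)) (s := ball x₀ 1) (ball_mem_nhds x₀ one_pos)
    ?_ ?_ ?_ ?_ ?_ ?_
  · exact key.2
  · exact Filter.Eventually.of_forall fun x =>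
      (hc.comp (continuous_const.prodMk (continuous_const.mul continuous_id))).aestronglyMeasurable
  · exact (hc.comp (continuous_const.prodMk (continuous_const.mul continuous_id))).intervalIntegrable _ _
  · exact (((hfd.comp (continuous_const.prodMk (continuous_const.mul continuous_id))).clm_apply
      (continuous_const.prodMk ((continuous_const.mul continuous_id).div_const 2)))).aestronglyMeasurable
  · refine Filter.Eventually.of_forall fun t ht x hx => ?_
    have ht' : |t| ≤ 1 := by
      rw [Set.uIoc_of_le (by norm_num : (-1:ℝ) ≤ 0)] at ht
      rw [abs_le]; exact ⟨ht.1.le, ht.2.trans zero_le_one⟩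
    have hx' : |x| ≤ |x₀| + 1 := by
      have := mem_ball_iff_norm.mp hx
      rw [Real.norm_eq_abs] at this
      have := abs_sub_abs_le_abs_sub x x₀
      linarith
    have hmem : ((x, C₁ * x / 2 * t) : ℝ × ℝ) ∈ closedBall (0 : ℝ × ℝ) R := by
      rw [mem_closedBall_zero_iff, Prod.norm_def]
      refine max_le ?_ ?_
      · rw [Real.norm_eq_abs]; nlinarith
      · rw [Real.norm_eq_abs, abs_mul, abs_div, abs_mul]
        have : |C₁| = C₁ := abs_of_pos hC₁
        rw [this]
        have h2 : |(2:ℝ)| = 2 := by norm_num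
        rw [h2]
        have hprod : C₁ * |x| * |t| ≤ C₁ * (|x₀| + 1) * 1 :=
          mul_le_mul (mul_le_mul_of_nonneg_left hx' hC₁.le) ht' (abs_nonneg t)
            (by positivity)
        nlinarith [abs_nonneg x₀, mul_nonneg (by positivity : (0:ℝ) ≤ |x₀| + 1) hC₁.le]
    calc ‖(fderiv ℝ h (x, C₁ * x / 2 * t)) (1, C₁ * t / 2)‖
        ≤ ‖fderiv ℝ h (x, C₁ * x / 2 * t)‖ * ‖((1:ℝ), C₁ * t / 2)‖ :=
          ContinuousLinearMap.le_opNorm _ _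
      _ ≤ K * (1 + C₁ / 2) := by
          refine mul_le_mul (hK _ hmem) ?_ (norm_nonneg _) hK0
          rw [Prod.norm_def]
          refine max_le ?_ ?_
          · rw [Real.norm_eq_abs]; norm_num; positivity
          · rw [Real.norm_eq_abs, abs_div, abs_mul]
            have : |C₁| = C₁ := abs_of_pos hC₁
            have h2 : |(2:ℝ)| = 2 := by norm_num
            rw [this, h2]
            nlinarith [abs_nonneg t]
  · exact intervalIntegrable_const
  · refine Filter.Eventually.of_forall fun t ht x hx => ?_
    have h1 : HasDerivAt (fun x : ℝ => C₁ * x / 2 * t) (C₁ * t / 2) x := by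
      have heq : (fun x : ℝ => C₁ * x / 2 * t) = fun x => (C₁ * t / 2) * x := by
        funext x; ring
      rw [heq]
      simpa using (hasDerivAt_id x).const_mul (C₁ * t / 2)
    have hg : HasDerivAt (fun x : ℝ => ((x, C₁ * x / 2 * t) : ℝ × ℝ)) (1, C₁ * t / 2) x :=
      (hasDerivAt_id x).prodMk h1
    exact (hh.differentiable one_ne_zero (x, C₁ * x / 2 * t)).hasFDerivAt.comp_hasDerivAt x hg


/-- L^p estimate for the derivative of the vertical average on the
triangular part of the fiber. -/
theorem stmt_1 (p : ℝ) (hp : 2 ≤ p) (C₁ ε : ℝ) (hC₁ : 0 < C₁) (hε : 0 < ε)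
    (h : ℝ × ℝ → ℝ) (hh : ContDiff ℝ 1 h)
    (F : ℝ → ℝ)
    (hF : ∀ x, F x = (2 / (C₁ * x)) * ∫ y in (-(C₁ * x) / 2)..0, h (x, y)) :
    (∫ x in (0:ℝ)..(ε / C₁), |deriv F x| ^ p) ≤
      ∫ x in (0:ℝ)..(ε / C₁), ((2 ^ p + C₁ ^ p) / (C₁ * x)) *
        ∫ y in (-(C₁ * x) / 2)..0,
          (|fderiv ℝ h (x, y) (1, 0)| ^ p + |fderiv ℝ h (x, y) (0, 1)| ^ p) := by
  have hp0 : (0:ℝ) ≤ p := by linarith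
  have hp1 : (1:ℝ) ≤ p := by linarith
  have hfd : Continuous (fderiv ℝ h) := hh.continuous_fderiv one_ne_zero
  have hM0 : (0:ℝ) ≤ ε / C₁ := (div_pos hε hC₁).le
  -- F agrees with the rescaled integral on Ioi 0
  have hFeq : ∀ x : ℝ, 0 < x → F x = ∫ t in (-1:ℝ)..0, h (x, C₁ * x / 2 * t) := by
    intro x hx
    have hcne : C₁ * x / 2 ≠ 0 := by positivity
    have hend : -(C₁ * x / 2) = -(C₁ * x) / 2 := by ring
    have hcv := my_cov (C₁ * x / 2) hcne (fun y => h (x, y))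
    rw [hend] at hcv
    rw [hF x, hcv]
    congr 1
    rw [inv_div]
  -- deriv F on Ioi 0
  have hderiv : ∀ x : ℝ, 0 < x → deriv F x =
      ∫ t in (-1:ℝ)..0, (fderiv ℝ h (x, C₁ * x / 2 * t)) (1, C₁ * t / 2) := by
    intro x hx
    have hev : F =ᶠ[nhds x] fun x' => ∫ t in (-1:ℝ)..0, h (x', C₁ * x' / 2 * t) := by
      filter_upwards [IsOpen.mem_nhds isOpen_Ioi hx] with x' hx'
      exact hFeq x' hx'
    rw [hev.deriv_eq]
    exact (my_hasDerivAt C₁ hC₁ h hh x).deriv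
  -- continuity of the candidate derivative
  have hLc : Continuous fun x : ℝ =>
      ∫ t in (-1:ℝ)..0, (fderiv ℝ h (x, C₁ * x / 2 * t)) (1, C₁ * t / 2) := by
    have hunc : Continuous fun q : ℝ × ℝ =>
        (fderiv ℝ h (q.1, C₁ * q.1 / 2 * q.2)) (1, C₁ * q.2 / 2) :=
      (hfd.comp (continuous_fst.prodMk
        (((continuous_const.mul continuous_fst).div_const 2).mul continuous_snd))).clm_apply
        (continuous_const.prodMk ((continuous_const.mul continuous_snd).div_const 2))
    exact continuous_parametric_intervalIntegral_of_continuous'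
      (f := fun x t => (fderiv ℝ h (x, C₁ * x / 2 * t)) (1, C₁ * t / 2)) (μ := volume)
      hunc (-1) 0
  -- continuity of the rescaled RHS
  have hRc : Continuous fun x : ℝ => ((2:ℝ) ^ p + C₁ ^ p) / 2 *
      ∫ t in (-1:ℝ)..0, (|(fderiv ℝ h (x, C₁ * x / 2 * t)) (1, 0)| ^ p +
        |(fderiv ℝ h (x, C₁ * x / 2 * t)) (0, 1)| ^ p) := by
    have hin : Continuous fun q : ℝ × ℝ => ((q.1, C₁ * q.1 / 2 * q.2) : ℝ × ℝ) :=
      continuous_fst.prodMk (((continuous_const.mul continuous_fst).div_const 2).mul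
        continuous_snd)
    have hunc : Continuous fun q : ℝ × ℝ =>
        (|(fderiv ℝ h (q.1, C₁ * q.1 / 2 * q.2)) (1, 0)| ^ p +
          |(fderiv ℝ h (q.1, C₁ * q.1 / 2 * q.2)) (0, 1)| ^ p) :=
      (((hfd.comp hin).clm_apply continuous_const).abs.rpow_const fun _ => Or.inr hp0).add
        (((hfd.comp hin).clm_apply continuous_const).abs.rpow_const fun _ => Or.inr hp0)
    exact continuous_const.mul
      (continuous_parametric_intervalIntegral_of_continuous'
        (f := fun x t => (|(fderiv ℝ h (x, C₁ * x / 2 * t)) (1, 0)| ^ p +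
          |(fderiv ℝ h (x, C₁ * x / 2 * t)) (0, 1)| ^ p)) (μ := volume) hunc (-1) 0)
  -- RHS integrand equals the rescaled continuous function on Ioi 0
  have hReq : ∀ x : ℝ, 0 < x →
      ((2 ^ p + C₁ ^ p) / (C₁ * x)) * (∫ y in (-(C₁ * x) / 2)..0,
          (|fderiv ℝ h (x, y) (1, 0)| ^ p + |fderiv ℝ h (x, y) (0, 1)| ^ p)) =
      ((2:ℝ) ^ p + C₁ ^ p) / 2 * ∫ t in (-1:ℝ)..0,
          (|(fderiv ℝ h (x, C₁ * x / 2 * t)) (1, 0)| ^ p +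
            |(fderiv ℝ h (x, C₁ * x / 2 * t)) (0, 1)| ^ p) := by
    intro x hx
    have hcne : C₁ * x / 2 ≠ 0 := by positivity
    have hend : -(C₁ * x / 2) = -(C₁ * x) / 2 := by ring
    have hcv := my_cov (C₁ * x / 2) hcne
      (fun y => |fderiv ℝ h (x, y) (1, 0)| ^ p + |fderiv ℝ h (x, y) (0, 1)| ^ p)
    rw [hend] at hcv
    rw [hcv]
    have hcx : C₁ * x ≠ 0 := by positivity
    field_simp
  rw [intervalIntegral.integral_of_le hM0, intervalIntegral.integral_of_le hM0]
  apply MeasureTheory.setIntegral_mono_on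
  · have hcont : Continuous fun x : ℝ =>
        |∫ t in (-1:ℝ)..0, (fderiv ℝ h (x, C₁ * x / 2 * t)) (1, C₁ * t / 2)| ^ p :=
      hLc.abs.rpow_const fun _ => Or.inr hp0
    exact hcont.integrableOn_Ioc.congr
      ((ae_restrict_iff' measurableSet_Ioc).mpr (Filter.Eventually.of_forall fun x hx =>
        congrArg (fun z => |z| ^ p) (hderiv x hx.1).symm))
  · exact (hRc.integrableOn_Ioc).congr
      ((ae_restrict_iff' measurableSet_Ioc).mpr (Filter.Eventually.of_forall fun x hx => (hReq x hx.1).symm))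
  · exact measurableSet_Ioc
  · intro x hx
    rw [hderiv x hx.1]
    exact my_pointwise p hp C₁ hC₁ h hh x hx.1
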